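/- Let γ_1 ∈ Dis_k(n) and γ_2 ∈ Dis_j(n). If σ ∈ Dis(n) is a least upper bound of γ_1 and γ_2 in the majorization order on Dis(n), then len(σ) = min{j, k}; and if ρ ∈ Dis(n) is a greatest lower bound of γ_1 and γ_2 in Dis(n), then len(ρ) = max{j, k}. In particular, if γ_1, γ_2 ∈ Dis_k(n), then any least upper bound and any greatest lower bound of γ_1 and γ_2 in Dis(n) lie in Dis_k(n). -/

import Mathlib

/-- A partition: a non-increasing list of positive integers. -/
def IsPartition (π : List ℕ) : Prop :=
  π.Pairwise (· ≥ ·) ∧ ∀ x ∈ π, 0 < x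

/-- A partition of `n` into distinct positive parts, listed in (strictly) decreasing order. -/
def DisPart (n : ℕ) (γ : List ℕ) : Prop :=
  γ.Pairwise (· > ·) ∧ (∀ x ∈ γ, 0 < x) ∧ γ.sum = n

/-- A partition of `n` into exactly `k` distinct positive parts. -/
def DisPartK (n k : ℕ) (γ : List ℕ) : Prop :=
  DisPart n γ ∧ γ.length = k

/-- `β` majorizes `α`. -/
def Majorizes (β α : List ℕ) : Prop :=
  β.sum = α.sum ∧ ∀ k ≤ min α.length β.length, (α.take k).sum ≤ (β.take k).sum

/-- α(π): the parts `d_i − i + 1` for 1-based indices `i` with `d_i ≥ i`. -/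
def alphaOf (π : List ℕ) : List ℕ :=
  (List.range π.length).filterMap
    (fun i => if i + 1 ≤ π.getD i 0 then some (π.getD i 0 - i) else none)

/-- Number of boxes of the Ferrers diagram strictly below the diagonal in (1-based) column `j`. -/
def betaColCount (π : List ℕ) (j : ℕ) : ℕ :=
  ((List.range π.length).filter (fun i => decide (j ≤ i ∧ j ≤ π.getD i 0))).length

/-- β(π): the positive column counts below the main diagonal, in decreasing order. -/
def betaOf (π : List ℕ) : List ℕ :=
  ((List.range π.length).map (fun j => betaColCount π (j + 1))).filter (fun c => c != 0)

/-- The mark (modified Durfee number) `m(π) = max {i : d_i ≥ i − 1}` (1-based indices). -/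
noncomputable def mark (π : List ℕ) : ℕ :=
  sSup {i : ℕ | 1 ≤ i ∧ i ≤ π.length ∧ i ≤ π.getD (i - 1) 0 + 1}

def IsIndepSet {V : Type*} (G : SimpleGraph V) (s : Set V) : Prop :=
  s.Pairwise (fun v w => ¬ G.Adj v w)

/-- `(K, S)` is a KS-partition of `G`. -/
def IsKS {V : Type*} [Fintype V] (G : SimpleGraph V) (K S : Finset V) : Prop :=
  (∀ v, v ∈ K ∨ v ∈ S) ∧ Disjoint K S ∧ G.IsClique (K : Set V) ∧ IsIndepSet G (S : Set V)

def IsSplit {V : Type*} [Fintype V] (G : SimpleGraph V) : Prop :=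
  ∃ K S, IsKS G K S

noncomputable def cliqueNum {V : Type*} [Fintype V] (G : SimpleGraph V) : ℕ :=
  sSup {n | ∃ s : Finset V, G.IsNClique n s}

noncomputable def indepNum {V : Type*} [Fintype V] (G : SimpleGraph V) : ℕ :=
  sSup {n | ∃ s : Finset V, IsIndepSet G (s : Set V) ∧ s.card = n}

/-- A balanced split graph: some KS-partition is simultaneously K-max and S-max. -/
def IsBalancedSplit {V : Type*} [Fintype V] (G : SimpleGraph V) : Prop :=
  IsSplit G ∧ ∃ K S, IsKS G K S ∧ K.card = cliqueNum G ∧ S.card = indepNum G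

/-- An unbalanced split graph. -/
def IsUnbalancedSplit {V : Type*} [Fintype V] (G : SimpleGraph V) : Prop :=
  IsSplit G ∧ ¬ ∃ K S, IsKS G K S ∧ K.card = cliqueNum G ∧ S.card = indepNum G

/-- `π` is the degree sequence of `G` (degrees in non-increasing order). -/
def HasDegSeq {V : Type*} [Fintype V] (G : SimpleGraph V) [DecidableRel G.Adj]
    (π : List ℕ) : Prop :=
  π.Pairwise (· ≥ ·) ∧ (π : Multiset ℕ) = Finset.univ.val.map (fun v => G.degree v)

def NoIsolated {V : Type*} [Fintype V] (G : SimpleGraph V) [DecidableRel G.Adj] : Prop :=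
  ∀ v, 0 < G.degree v

def IsThreshold {V : Type*} [Fintype V] (G : SimpleGraph V) : Prop :=
  ∃ (t : ℝ) (a : V → ℝ), 0 < t ∧ (∀ v, 0 < a v) ∧
    ∀ s : Finset V, (IsIndepSet G (s : Set V) ↔ ∑ v ∈ s, a v ≤ t)

noncomputable def chromNum {V : Type*} [Fintype V] (G : SimpleGraph V) : ℕ :=
  sInf {n | G.Colorable n}

def IsNG {V : Type*} [Fintype V] (G : SimpleGraph V) : Prop :=
  chromNum G + chromNum Gᶜ = Fintype.card V + 1

def ngA {V : Type*} [Fintype V] (G : SimpleGraph V) [DecidableRel G.Adj] : Set V :=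
  {v | G.degree v = chromNum G - 1}

def IsNG1 {V : Type*} [Fintype V] (G : SimpleGraph V) [DecidableRel G.Adj] : Prop :=
  IsNG G ∧ G.IsClique (ngA G)

def IsNG2 {V : Type*} [Fintype V] (G : SimpleGraph V) [DecidableRel G.Adj] : Prop :=
  IsNG G ∧ IsIndepSet G (ngA G)

def IsNG3 {V : Type*} [Fintype V] (G : SimpleGraph V) [DecidableRel G.Adj] : Prop :=
  IsNG G ∧ Nonempty ((G.induce (ngA G)) ≃g SimpleGraph.cycleGraph 5)

/-- `[α|β]` is an S-block for the integer `n`. -/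
def IsSBlock (n : ℕ) (α β : List ℕ) : Prop :=
  DisPart n α ∧ DisPart n β ∧ Majorizes β α ∧
    (α.length = β.length ∨ α.length = β.length + 1)

/-- `[α₁|β₁] ⪰ [α₂|β₂]` in the block order. -/
def BlockMaj (α₁ β₁ α₂ β₂ : List ℕ) : Prop :=
  Majorizes α₁ α₂ ∧ Majorizes β₂ β₁

/-- τ'_k(n) = (n − C(k,2), k−1, k−2, …, 2, 1). -/
def tauMax (n k : ℕ) : List ℕ :=
  (n - Nat.choose k 2) :: ((List.range (k - 1)).reverse.map (· + 1))

/-- τ_k(n): parts (k−i+1)+q+1 for 1 ≤ i ≤ r and (k−i+1)+q for r < i ≤ k,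
where n − C(k+1,2) = qk + r, 0 ≤ r < k. -/
def tauMin (n k : ℕ) : List ℕ :=
  (List.range k).map
    (fun i => (k - i) + (n - Nat.choose (k + 1) 2) / k +
      (if i < (n - Nat.choose (k + 1) 2) % k then 1 else 0))

/-- `β` covers `α` in `Dis(n)`. -/
def CoversDis (n : ℕ) (β α : List ℕ) : Prop :=
  DisPart n α ∧ DisPart n β ∧ Majorizes β α ∧ β ≠ α ∧
    ¬ ∃ γ, DisPart n γ ∧ Majorizes β γ ∧ Majorizes γ α ∧ γ ≠ α ∧ γ ≠ β

/-- `[α₁|β₁]` covers `[α₂|β₂]` in `S-Block(n)`. -/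
def BlockCovers (n : ℕ) (α₁ β₁ α₂ β₂ : List ℕ) : Prop :=
  IsSBlock n α₁ β₁ ∧ IsSBlock n α₂ β₂ ∧ BlockMaj α₁ β₁ α₂ β₂ ∧ ¬(α₁ = α₂ ∧ β₁ = β₂) ∧
    ¬ ∃ α β, IsSBlock n α β ∧ BlockMaj α₁ β₁ α β ∧ BlockMaj α β α₂ β₂ ∧
      ¬(α = α₁ ∧ β = β₁) ∧ ¬(α = α₂ ∧ β = β₂)

/-- `[α|β]` is a threshold-covered block: member of TC(n). -/
def InTC (n : ℕ) (α β : List ℕ) : Prop :=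
  IsSBlock n α β ∧ CoversDis n β α

def IsLubDis (n : ℕ) (a b c : List ℕ) : Prop :=
  Majorizes c a ∧ Majorizes c b ∧
    ∀ d, DisPart n d → Majorizes d a → Majorizes d b → Majorizes d c

def IsGlbDis (n : ℕ) (a b c : List ℕ) : Prop :=
  Majorizes a c ∧ Majorizes b c ∧
    ∀ d, DisPart n d → Majorizes a d → Majorizes b d → Majorizes c d

/-!
Majorization between partitions into positive parts can only shorten them: `β ⪰ α` forces
`len β ≤ len α`. Among the distinct partitions of `n` with at least `m` parts the largest is
`τ'_m(n) = (n − C(m,2), m − 1, …, 1)`, and among those with at most `m` parts the smallest is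
`τ_m(n)`, the staircase `(m, …, 1)` plus an as-even-as-possible partition of the rest. An upper
bound of `γ₁, γ₂` has at most `min j k` parts, and a least one lies below `τ'_{min j k}(n)`, so it
has at least `min j k` parts; dually for lower bounds with `τ_{max j k}(n)`.
-/

theorem sum_lower_bound_of_pairwise_lt {l : List ℕ} (hl : l.Pairwise (· < ·)) {g : ℕ}
    (hg : ∀ x ∈ l, g ≤ x) : 2 * (l.length * g) + l.length * l.length ≤ 2 * l.sum + l.length := by
  induction l generalizing g with
  | nil => simp
  | cons a t ih =>
    rw [List.pairwise_cons] at hl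
    have ht := ih hl.2 (g := a + 1) hl.1
    have ha := hg a List.mem_cons_self
    simp only [List.length_cons, List.sum_cons]
    nlinarith

theorem sum_lower_bound_of_pairwise_gt {l : List ℕ} (hl : l.Pairwise (· > ·)) {g : ℕ}
    (hg : ∀ x ∈ l, g ≤ x) : 2 * (l.length * g) + l.length * l.length ≤ 2 * l.sum + l.length := by
  simpa using sum_lower_bound_of_pairwise_lt (List.pairwise_reverse.2 hl) (g := g)
    (fun x hx => hg x (List.mem_reverse.1 hx))

theorem sum_upper_bound_of_pairwise_gt {l : List ℕ} (hl : l.Pairwise (· > ·)) {h : ℕ}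
    (hh : ∀ x ∈ l, x < h) : 2 * l.sum + l.length * l.length + l.length ≤ 2 * (l.length * h) := by
  induction l generalizing h with
  | nil => simp
  | cons a t ih =>
    rw [List.pairwise_cons] at hl
    have ht := ih hl.2 hl.1
    have ha := hh a List.mem_cons_self
    simp only [List.length_cons, List.sum_cons]
    nlinarith

theorem List.Pairwise.getElem_le_of_mem_take {α : Type*} [Preorder α] {l : List α}
    (hl : l.Pairwise (· > ·)) {i : ℕ} (hi : i < l.length) {x : α} (hx : x ∈ l.take (i + 1)) :
    l[i] ≤ x := by
  obtain ⟨j, hj, rfl⟩ := List.mem_take_iff_getElem.1 hx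
  obtain hji | rfl := Nat.lt_or_eq_of_le (Nat.lt_succ_iff.1 (hj.trans_le (min_le_left _ _)))
  · exact (List.pairwise_iff_getElem.1 hl j i _ hi hji).le
  · exact le_rfl

theorem List.Pairwise.lt_getElem_of_mem_drop {α : Type*} [Preorder α] {l : List α}
    (hl : l.Pairwise (· > ·)) {i : ℕ} (hi : i < l.length) {y : α} (hy : y ∈ l.drop (i + 1)) :
    y < l[i] :=
  hl.rel_of_mem_take_of_mem_drop (List.mem_take_iff_getElem.2 ⟨i, by omega, rfl⟩) hy

theorem length_mul_succ_le_two_mul_sum {l : List ℕ} (hl : l.Pairwise (· > ·))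
    (hpos : ∀ x ∈ l, 0 < x) : l.length * (l.length + 1) ≤ 2 * l.sum := by
  have := sum_lower_bound_of_pairwise_gt hl (g := 1) hpos
  nlinarith

theorem DisPart.length_mul_succ_le {n : ℕ} {γ : List ℕ} (hγ : DisPart n γ) :
    γ.length * (γ.length + 1) ≤ 2 * n :=
  hγ.2.2 ▸ length_mul_succ_le_two_mul_sum hγ.1 hγ.2.1

theorem Majorizes.length_le {β α : List ℕ} (h : Majorizes β α) (hβ : ∀ x ∈ β, 0 < x) :
    β.length ≤ α.length := by
  by_contra! hlt
  have htake := h.2 α.length (by omega)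
  rw [List.take_length] at htake
  have hdrop : 0 < (β.drop α.length).sum :=
    List.sum_pos _ (fun x hx => hβ x (List.mem_of_mem_drop hx)) (by simpa using hlt)
  have := List.sum_take_add_sum_drop β α.length
  have := h.1
  omega

theorem majorizes_of_sum_drop_le {β α : List ℕ} (hsum : β.sum = α.sum)
    (hdrop : ∀ i ≤ min α.length β.length, (β.drop i).sum ≤ (α.drop i).sum) : Majorizes β α := by
  refine ⟨hsum, fun i hi => ?_⟩
  have := hdrop i hi
  have := List.sum_take_add_sum_drop α i
  have := List.sum_take_add_sum_drop β i
  omega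

theorem majorizes_of_min_length_eq_zero {β α : List ℕ} (hsum : β.sum = α.sum)
    (hlen : min α.length β.length = 0) : Majorizes β α :=
  ⟨hsum, fun i hi => by simp [Nat.le_zero.1 (hlen ▸ hi)]⟩

theorem two_mul_sum_staircase (t : ℕ) :
    2 * ((List.range t).reverse.map (· + 1)).sum = t * (t + 1) := by
  rw [List.map_reverse, List.sum_reverse]
  induction t with
  | zero => rfl
  | succ t ih =>
    rw [List.range_succ, List.map_append, List.sum_append]
    simp only [List.map_cons, List.map_nil, List.sum_cons, List.sum_nil]
    nlinarith

theorem two_mul_choose_two (k : ℕ) : 2 * k.choose 2 = k * (k - 1) := by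
  rw [Nat.choose_two_right, Nat.mul_div_cancel' (Nat.even_mul_pred_self k).two_dvd]

theorem choose_two_add_le {n k : ℕ} (hn : k * (k + 1) ≤ 2 * n) : k.choose 2 + k ≤ n := by
  have := two_mul_choose_two k
  rcases k with _ | t
  · simp
  · rw [Nat.add_sub_cancel] at this
    nlinarith

theorem tauMax_length {n k : ℕ} (hk : 0 < k) : (tauMax n k).length = k := by
  simp only [tauMax, List.length_cons, List.length_map, List.length_reverse, List.length_range]
  omega

theorem tauMax_sum {n k : ℕ} (hk : 0 < k) (hn : k * (k + 1) ≤ 2 * n) : (tauMax n k).sum = n := by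
  have hstair := two_mul_sum_staircase (k - 1)
  have hchoose := two_mul_choose_two k
  have := choose_two_add_le hn
  have : (k - 1) * (k - 1 + 1) = k * (k - 1) := by rw [Nat.sub_add_cancel hk, Nat.mul_comm]
  rw [tauMax, List.sum_cons]
  omega

theorem two_mul_sum_drop_tauMax (n k : ℕ) {i : ℕ} (hi : 0 < i) (hik : i ≤ k) :
    2 * ((tauMax n k).drop i).sum = (k - i) * (k - i + 1) := by
  obtain ⟨t, rfl⟩ : ∃ t, i = t + 1 := ⟨i - 1, by omega⟩
  rw [tauMax, List.drop_succ_cons, ← List.map_drop, List.drop_reverse, List.length_range,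
    List.take_range, show min (k - 1 - t) (k - 1) = k - (t + 1) by omega]
  exact two_mul_sum_staircase _

theorem disPartK_tauMax {n k : ℕ} (hk : 0 < k) (hn : k * (k + 1) ≤ 2 * n) :
    DisPartK n k (tauMax n k) := by
  have hhead := choose_two_add_le hn
  refine ⟨⟨?_, ?_, tauMax_sum hk hn⟩, tauMax_length hk⟩
  · refine List.pairwise_cons.2 ⟨fun x hx => ?_, ?_⟩
    · simp only [List.mem_map, List.mem_reverse, List.mem_range] at hx
      omega
    · rw [List.pairwise_map, List.pairwise_reverse]
      exact List.pairwise_lt_range.imp (by omega)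
  · intro x hx
    simp only [tauMax, List.mem_cons, List.mem_map, List.mem_reverse, List.mem_range] at hx
    omega

theorem tauMax_majorizes {n k : ℕ} (hk : 0 < k) (hn : k * (k + 1) ≤ 2 * n) {γ : List ℕ}
    (hγ : DisPart n γ) (hlen : k ≤ γ.length) : Majorizes (tauMax n k) γ := by
  refine majorizes_of_sum_drop_le (by rw [tauMax_sum hk hn, hγ.2.2]) fun i hi => ?_
  rw [tauMax_length hk] at hi
  obtain rfl | hi0 := Nat.eq_zero_or_pos i
  · rw [List.drop_zero, List.drop_zero, tauMax_sum hk hn, hγ.2.2]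
  have hτ := two_mul_sum_drop_tauMax n k hi0 (hi.trans (min_le_right _ _))
  have hγdrop := length_mul_succ_le_two_mul_sum (hγ.1.sublist (List.drop_sublist i γ))
    (fun x hx => hγ.2.1 x (List.mem_of_mem_drop hx))
  rw [List.length_drop] at hγdrop
  have : (k - i) * (k - i + 1) ≤ (γ.length - i) * (γ.length - i + 1) :=
    Nat.mul_le_mul (by omega) (by omega)
  omega

theorem two_mul_sum_balanced (m q r : ℕ) {i : ℕ} (hi : i ≤ m) :
    2 * ((List.range i).map (fun t => (m - t) + q + if t < r then 1 else 0)).sum + i * i =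
      2 * (i * m) + i + 2 * (i * q) + 2 * min i r := by
  induction i with
  | zero => simp
  | succ i ih =>
    rw [List.range_succ, List.map_append, List.sum_append]
    simp only [List.map_cons, List.map_nil, List.sum_cons, List.sum_nil]
    have := ih (by omega)
    split_ifs <;> grind

theorem tauMin_take {n m i : ℕ} (hi : i ≤ m) :
    (tauMin n m).take i = (List.range i).map (fun t => (m - t) + (n - (m + 1).choose 2) / m +
      if t < (n - (m + 1).choose 2) % m then 1 else 0) := by
  rw [tauMin, ← List.map_take, List.take_range, min_eq_left hi]

theorem tauMin_sum {n m : ℕ} (hm : 0 < m) (hn : m * (m + 1) ≤ 2 * n) : (tauMin n m).sum = n := by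
  have hsum := two_mul_sum_balanced m ((n - (m + 1).choose 2) / m)
    ((n - (m + 1).choose 2) % m) le_rfl
  rw [← tauMin_take le_rfl, List.take_of_length_le (by simp [tauMin])] at hsum
  have hdiv := Nat.div_add_mod (n - (m + 1).choose 2) m
  have hmod := Nat.mod_lt (n - (m + 1).choose 2) hm
  have hchoose := two_mul_choose_two (m + 1)
  rw [Nat.add_sub_cancel] at hchoose
  have : (m + 1) * m = m * m + m := by ring
  have : m * (m + 1) = m * m + m := by ring
  omega

theorem disPartK_tauMin {n m : ℕ} (hm : 0 < m) (hn : m * (m + 1) ≤ 2 * n) :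
    DisPartK n m (tauMin n m) := by
  refine ⟨⟨?_, fun x hx => ?_, tauMin_sum hm hn⟩, by simp [tauMin]⟩
  · rw [tauMin, List.pairwise_map]
    exact List.pairwise_lt_range.imp_of_mem fun ha hb hab => by
      rw [List.mem_range] at ha hb
      split_ifs <;> omega
  · obtain ⟨t, ht, rfl⟩ := List.mem_map.1 hx
    rw [List.mem_range] at ht
    generalize (n - (m + 1).choose 2) / m = q
    omega

theorem majorizes_tauMin {n m : ℕ} (hm : 0 < m) (hn : m * (m + 1) ≤ 2 * n) {γ : List ℕ}
    (hγ : DisPart n γ) (hlen : γ.length ≤ m) : Majorizes γ (tauMin n m) := by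
  refine ⟨by rw [tauMin_sum hm hn, hγ.2.2], fun i hi => ?_⟩
  obtain rfl | ⟨p, rfl⟩ : i = 0 ∨ ∃ p, i = p + 1 := by cases i <;> simp
  · simp
  have hpγ : p < γ.length := by have := min_le_right (tauMin n m).length γ.length; omega
  set g := γ[p]
  have hprefix := sum_lower_bound_of_pairwise_gt (hγ.1.sublist (List.take_sublist (p + 1) γ))
    (g := g) fun x hx => hγ.1.getElem_le_of_mem_take hpγ hx
  have hsuffix := sum_upper_bound_of_pairwise_gt (hγ.1.sublist (List.drop_sublist (p + 1) γ))
    (h := g) fun y hy => hγ.1.lt_getElem_of_mem_drop hpγ hy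
  rw [List.length_take, min_eq_left (by omega)] at hprefix
  rw [List.length_drop] at hsuffix
  have hsplit := List.sum_take_add_sum_drop γ (p + 1)
  have hτ := two_mul_sum_balanced m ((n - (m + 1).choose 2) / m) ((n - (m + 1).choose 2) % m)
    (i := p + 1) (by omega)
  rw [← tauMin_take (by omega)] at hτ
  have hdiv := Nat.div_add_mod (n - (m + 1).choose 2) m
  have hchoose := two_mul_choose_two (m + 1)
  rw [Nat.add_sub_cancel] at hchoose
  generalize (n - (m + 1).choose 2) / m = q at *
  generalize (n - (m + 1).choose 2) % m = r at *
  have hdouble : 2 * (m * q) + 2 * r + m * (m + 1) = 2 * n := by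
    have : (m + 1) * m = m * (m + 1) := Nat.mul_comm _ _
    omega
  obtain ⟨s, hs⟩ : ∃ s, γ.length = p + 1 + s := ⟨γ.length - (p + 1), by omega⟩
  obtain ⟨e, rfl⟩ : ∃ e, m = p + 1 + s + e := ⟨m - (p + 1 + s), by omega⟩
  rw [hs, Nat.add_sub_cancel_left] at hsuffix
  rw [hγ.2.2] at hsplit
  -- with `g` the `(p+1)`-st part: if `g` is large the first `p + 1` parts alone are big enough,
  -- otherwise every later part is below `g`, which caps the rest of the sum
  rcases le_or_gt (p + 1 + s + e + q + 2) (g + (p + 1)) with hbig | hsmall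
  · nlinarith [min_le_left (p + 1) r]
  · nlinarith [min_le_right (p + 1) r]

theorem exists_disPartK_majorizes_of_le_length {n m : ℕ} {γ₀ : List ℕ} (h₀ : DisPartK n m γ₀) :
    ∃ τ, DisPartK n m τ ∧ ∀ γ, DisPart n γ → m ≤ γ.length → Majorizes τ γ := by
  obtain rfl | hm := Nat.eq_zero_or_pos m
  -- `tauMax n 0 = [n]`, so the empty `γ₀` serves instead
  · exact ⟨γ₀, h₀, fun γ hγ _ =>
      majorizes_of_min_length_eq_zero (h₀.1.2.2.trans hγ.2.2.symm) (by simp [h₀.2])⟩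
  have hn := h₀.2 ▸ h₀.1.length_mul_succ_le
  exact ⟨tauMax n m, disPartK_tauMax hm hn, fun γ hγ hlen => tauMax_majorizes hm hn hγ hlen⟩

theorem exists_disPartK_majorized_of_length_le {n m : ℕ} {γ₀ : List ℕ} (h₀ : DisPartK n m γ₀) :
    ∃ τ, DisPartK n m τ ∧ ∀ γ, DisPart n γ → γ.length ≤ m → Majorizes γ τ := by
  obtain rfl | hm := Nat.eq_zero_or_pos m
  · exact ⟨γ₀, h₀, fun γ hγ _ =>
      majorizes_of_min_length_eq_zero (hγ.2.2.trans h₀.1.2.2.symm) (by simp [h₀.2])⟩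
  have hn := h₀.2 ▸ h₀.1.length_mul_succ_le
  exact ⟨tauMin n m, disPartK_tauMin hm hn, fun γ hγ hlen => majorizes_tauMin hm hn hγ hlen⟩

theorem IsLubDis.length_eq {n j k : ℕ} {γ₁ γ₂ σ : List ℕ} (h₁ : DisPartK n k γ₁)
    (h₂ : DisPartK n j γ₂) (hσ : DisPart n σ) (hlub : IsLubDis n γ₁ γ₂ σ) :
    σ.length = min j k := by
  obtain ⟨hσ₁, hσ₂, hleast⟩ := hlub
  obtain ⟨γ₀, h₀⟩ : ∃ γ₀, DisPartK n (min j k) γ₀ := by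
    rcases min_choice j k with h | h <;> rw [h] <;> exact ⟨_, ‹_›⟩
  obtain ⟨τ, hτ, hτmax⟩ := exists_disPartK_majorizes_of_le_length h₀
  have hτσ := hleast τ hτ.1 (hτmax γ₁ h₁.1 (h₁.2 ▸ min_le_right j k))
    (hτmax γ₂ h₂.1 (h₂.2 ▸ min_le_left j k))
  have := hτσ.length_le hτ.1.2.1
  have := hσ₁.length_le hσ.2.1
  have := hσ₂.length_le hσ.2.1
  have := h₁.2; have := h₂.2; have := hτ.2
  omega

theorem IsGlbDis.length_eq {n j k : ℕ} {γ₁ γ₂ ρ : List ℕ} (h₁ : DisPartK n k γ₁)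
    (h₂ : DisPartK n j γ₂) (hρ : DisPart n ρ) (hglb : IsGlbDis n γ₁ γ₂ ρ) :
    ρ.length = max j k := by
  obtain ⟨hρ₁, hρ₂, hgreatest⟩ := hglb
  obtain ⟨γ₀, h₀⟩ : ∃ γ₀, DisPartK n (max j k) γ₀ := by
    rcases max_choice j k with h | h <;> rw [h] <;> exact ⟨_, ‹_›⟩
  obtain ⟨τ, hτ, hτmin⟩ := exists_disPartK_majorized_of_length_le h₀
  have hρτ := hgreatest τ hτ.1 (hτmin γ₁ h₁.1 (h₁.2 ▸ le_max_right j k))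
    (hτmin γ₂ h₂.1 (h₂.2 ▸ le_max_left j k))
  have := hρτ.length_le hρ.2.1
  have := hρ₁.length_le h₁.1.2.1
  have := hρ₂.length_le h₂.1.2.1
  have := h₁.2; have := h₂.2; have := hτ.2
  omega

/-- For γ₁ ∈ Dis_k(n) and γ₂ ∈ Dis_j(n), any least upper bound of γ₁, γ₂ in
Dis(n) has length min{j,k} and any greatest lower bound has length max{j,k}; in particular
for γ₁, γ₂ ∈ Dis_k(n) any LUB or GLB lies in Dis_k(n). -/
theorem stmt8 (n j k : ℕ) (γ₁ γ₂ : List ℕ) (h₁ : DisPartK n k γ₁) (h₂ : DisPartK n j γ₂) :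
    (∀ σ, DisPart n σ → IsLubDis n γ₁ γ₂ σ → σ.length = min j k) ∧
      (∀ ρ, DisPart n ρ → IsGlbDis n γ₁ γ₂ ρ → ρ.length = max j k) ∧
      (j = k → (∀ σ, DisPart n σ → IsLubDis n γ₁ γ₂ σ → DisPartK n k σ) ∧
        (∀ ρ, DisPart n ρ → IsGlbDis n γ₁ γ₂ ρ → DisPartK n k ρ)) := by
  refine ⟨fun σ hσ hlub => hlub.length_eq h₁ h₂ hσ, fun ρ hρ hglb => hglb.length_eq h₁ h₂ hρ,
    fun hjk => ⟨fun σ hσ hlub => ⟨hσ, ?_⟩, fun ρ hρ hglb => ⟨hρ, ?_⟩⟩⟩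
  · rw [hlub.length_eq h₁ h₂ hσ, hjk, min_self]
  · rw [hglb.length_eq h₁ h₂ hρ, hjk, max_self]
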